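/- arXiv:2402.09235 — 2 statements merged into one kernel-verified Lean document; each statement's English description precedes it below -/
import Mathlib

section
/- Let Ω ⊆ ℂ be a domain with nonempty boundary and diam(Ω) > 0. Suppose Ω satisfies condition (Δ)_{2,β} for some β > 0: there exist constants ε ∈ (0,1), C > 0 and r₀ ∈ (0, 1/e) such that for every a ∈ ∂Ω, every r ∈ (0, r₀), every u ∈ F_{a,r}, and every z ∈ Ω with |z − a| = C·r·(log(1/r))^{−β}, one has u(z) ≤ 1 − ε. Then there exists β′ > β such that ∂Ω satisfies condition (U)_{2,β′}. -/
open Metric Set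

/-- A real function is harmonic on an open set `s ⊆ ℂ` iff it is continuous on
`s` and satisfies the circle mean-value property on every closed disc
contained in `s`. -/
def HarmonicOn (u : ℂ → ℝ) (s : Set ℂ) : Prop :=
  ContinuousOn u s ∧ ∀ c : ℂ, ∀ ρ : ℝ, 0 < ρ → closedBall c ρ ⊆ s →
    u c = (1 / (2 * Real.pi)) *
      ∫ θ in (0 : ℝ)..(2 * Real.pi), u (c + ρ * Complex.exp (θ * Complex.I))

/-- The family `F_{a,r}` of competitors for the harmonic measure of
`∂D(a,r) ∩ Ω` in `Ω ∩ D(a,r)`. -/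
def MemF (Ω : Set ℂ) (a : ℂ) (r : ℝ) (u : ℂ → ℝ) : Prop :=
  HarmonicOn u (Ω ∩ ball a r) ∧
  (∀ z ∈ Ω ∩ ball a r, u z ≤ 1) ∧
  (∀ ζ ∈ frontier Ω ∩ ball a r,
    Filter.limsup u (nhdsWithin ζ (Ω ∩ ball a r)) ≤ 0)

/-- A set `E ⊆ ℂ` satisfies condition `(U)_{2,β}`. -/
def CondU2 (E : Set ℂ) (β : ℝ) : Prop :=
  ∃ C > (0 : ℝ), ∃ r₀ > (0 : ℝ), ∀ a ∈ E, ∀ r ∈ Set.Ioo (0 : ℝ) r₀,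
    ({z : ℂ | C * r * (Real.log (1 / r)) ^ (-β) ≤ dist z a ∧ dist z a ≤ r} ∩ E).Nonempty

/-! If the annulus `C r (log 1/r)^(-β') ≤ |z - a| ≤ r` misses `∂Ω`, then, with `ρ` its inner
radius, `u = log (|z - a| / ρ) / log (r / ρ)` belongs to `F_{a,r}`. By connectedness some point of
`Ω` lies at distance `C r (log 1/r)^(-β)` from `a`; there `u` equals
`(β' - β) log log (1/r) / (β' log log (1/r) - log C)`, which exceeds `1 - ε` for small `r` as soon
as `ε β' > β`. -/

open Filter Topology InnerProductSpace

theorem harmonicOn_of_harmonicOnNhd {u : ℂ → ℝ} {s : Set ℂ} (hu : HarmonicOnNhd u s) :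
    HarmonicOn u s := by
  refine ⟨hu.continuousOn, fun c ρ hρ hsub => ?_⟩
  rw [← (hu.mono (by rwa [abs_of_pos hρ])).circleAverage_eq (R := ρ), Real.circleAverage_def,
    smul_eq_mul, one_div]
  rfl

theorem harmonicOnNhd_log_norm_sub_div {a : ℂ} {s : Set ℂ} (ha : a ∉ s) (p q : ℝ) :
    HarmonicOnNhd (fun z => (Real.log ‖z - a‖ - p) / q) s := by
  intro z hz
  have hlog : HarmonicAt (fun z => Real.log ‖z - a‖) z :=
    (analyticAt_id.sub analyticAt_const).harmonicAt_log_norm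
      (sub_ne_zero.mpr (ne_of_mem_of_not_mem hz ha))
  convert (hlog.sub (harmonicAt_const p)).const_smul (c := q⁻¹) using 1
  ext w
  simp [div_eq_inv_mul]

/-- When the eventual upper bounds of `u` are unbounded below, `limsup u f` is the junk value `0`. -/
theorem Real.limsup_nonpos {α : Type*} {f : Filter α} {u : α → ℝ} (h : ∀ᶠ x in f, u x ≤ 0) :
    limsup u f ≤ 0 := by
  rw [limsup_eq]
  by_cases hb : BddBelow {t | ∀ᶠ x in f, u x ≤ t}
  · exact csInf_le hb h
  · rw [Real.sInf_of_not_bddBelow hb]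

theorem memF_log_barrier {Ω : Set ℂ} {a : ℂ} {ρ r : ℝ} (haΩ : a ∉ Ω) (hρ : 0 < ρ) (hρr : ρ < r)
    (hgap : ∀ ζ ∈ frontier Ω, dist ζ a < r → dist ζ a < ρ) :
    MemF Ω a r (fun z => (Real.log ‖z - a‖ - Real.log ρ) / (Real.log r - Real.log ρ)) := by
  have hq : 0 < Real.log r - Real.log ρ := sub_pos.mpr (Real.log_lt_log hρ hρr)
  have hnorm : ∀ z ∈ Ω, 0 < ‖z - a‖ := fun z hz =>
    norm_pos_iff.mpr (sub_ne_zero.mpr (ne_of_mem_of_not_mem hz haΩ))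
  refine ⟨harmonicOn_of_harmonicOnNhd (harmonicOnNhd_log_norm_sub_div (fun h => haΩ h.1) _ _),
    ?_, ?_⟩
  · rintro z ⟨hzΩ, hzr⟩
    rw [div_le_one hq, sub_le_sub_iff_right]
    exact Real.log_le_log (hnorm z hzΩ) (mem_ball_iff_norm.mp hzr).le
  · rintro ζ ⟨hζ, hζr⟩
    refine Real.limsup_nonpos ?_
    have hball : ball a ρ ∈ 𝓝 ζ := isOpen_ball.mem_nhds (hgap ζ hζ (mem_ball.mp hζr))
    filter_upwards [mem_nhdsWithin_of_mem_nhds hball, self_mem_nhdsWithin] with z hzρ hz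
    refine div_nonpos_of_nonpos_of_nonneg ?_ hq.le
    exact sub_nonpos.mpr (Real.log_le_log (hnorm z hz.1) (mem_ball_iff_norm.mp hzρ).le)

theorem IsPreconnected.exists_mem_dist_eq {X : Type*} [PseudoMetricSpace X] {s : Set X}
    (hs : IsPreconnected s) {a w₁ w₂ : X} (ha : a ∈ closure s) (hw₁ : w₁ ∈ s) (hw₂ : w₂ ∈ s)
    {t : ℝ} (ht : 0 < t) (htw : t ≤ dist w₁ w₂ / 2) : ∃ z ∈ s, dist z a = t := by
  obtain ⟨z₀, hz₀, hz₀a⟩ := Metric.mem_closure_iff.mp ha t ht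
  obtain ⟨w, hw, htw⟩ : ∃ w ∈ s, t ≤ dist w a := by
    by_contra! h
    linarith [dist_triangle_right w₁ w₂ a, h w₁ hw₁, h w₂ hw₂]
  exact hs.intermediate_value hz₀ hw (continuous_id.dist continuous_const).continuousOn
    ⟨by rw [dist_comm]; exact hz₀a.le, htw⟩

theorem exists_frontier_mem_annulus {Ω : Set ℂ} (hopen : IsOpen Ω) (hconn : IsPreconnected Ω)
    {a w₁ w₂ : ℂ} (ha : a ∈ frontier Ω) (hw₁ : w₁ ∈ Ω) (hw₂ : w₂ ∈ Ω) {ε ρ ρ₁ r : ℝ}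
    (hρ : 0 < ρ) (hρr : ρ < r) (hρ₁ : 0 < ρ₁) (hρ₁w : ρ₁ ≤ dist w₁ w₂ / 2)
    (hΔ : ∀ u, MemF Ω a r u → ∀ z ∈ Ω, dist z a = ρ₁ → u z ≤ 1 - ε)
    (hgain : (1 - ε) * (Real.log r - Real.log ρ) < Real.log ρ₁ - Real.log ρ) :
    ∃ ζ ∈ frontier Ω, ρ ≤ dist ζ a ∧ dist ζ a ≤ r := by
  by_contra! hgap
  have haΩ : a ∉ Ω := (hopen.frontier_eq ▸ ha).2
  have hbarrier := memF_log_barrier haΩ hρ hρr fun ζ hζ hζr => by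
    by_contra! hρζ
    exact (hgap ζ hζ hρζ).not_ge hζr.le
  obtain ⟨z, hz, hza⟩ := hconn.exists_mem_dist_eq (frontier_subset_closure ha) hw₁ hw₂ hρ₁ hρ₁w
  have hu := hΔ _ hbarrier z hz hza
  rw [← dist_eq_norm, hza, div_le_iff₀ (sub_pos.mpr (Real.log_lt_log hρ hρr))] at hu
  linarith

theorem Real.log_mul_mul_rpow_neg {C r L : ℝ} (hC : 0 < C) (hr : 0 < r) (hL : 0 < L) (γ : ℝ) :
    Real.log (C * r * L ^ (-γ)) = Real.log C + Real.log r - γ * Real.log L := by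
  rw [Real.log_mul (by positivity) (Real.rpow_pos_of_pos hL _).ne', Real.log_mul hC.ne' hr.ne',
    Real.log_rpow hL]
  ring

theorem exists_frontier_mem_annulus_rpow {Ω : Set ℂ} (hopen : IsOpen Ω) (hconn : IsPreconnected Ω)
    {a w₁ w₂ : ℂ} (ha : a ∈ frontier Ω) (hw₁ : w₁ ∈ Ω) (hw₂ : w₂ ∈ Ω) {ε β β' C r L : ℝ}
    (hβ : 0 ≤ β) (hC : 0 < C) (hr : 0 < r) (hL : 1 ≤ L) (hCr : C * r ≤ dist w₁ w₂ / 2)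
    (hCβ' : Real.log C < β' * Real.log L)
    (hgain : -((1 - ε) * Real.log C) < (ε * β' - β) * Real.log L)
    (hΔ : ∀ u, MemF Ω a r u → ∀ z ∈ Ω, dist z a = C * r * L ^ (-β) → u z ≤ 1 - ε) :
    ∃ ζ ∈ frontier Ω, C * r * L ^ (-β') ≤ dist ζ a ∧ dist ζ a ≤ r := by
  have hlog := fun γ => Real.log_mul_mul_rpow_neg hC hr (zero_lt_one.trans_le hL) γ
  refine exists_frontier_mem_annulus hopen hconn ha hw₁ hw₂ (by positivity) ?_ (by positivity)
    ?_ hΔ ?_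
  · rw [← Real.log_lt_log_iff (by positivity) hr, hlog]
    linarith
  · exact (mul_le_of_le_one_right (by positivity)
      (Real.rpow_le_one_of_one_le_of_nonpos hL (neg_nonpos.mpr hβ))).trans hCr
  · rw [hlog, hlog]
    linarith

theorem tendsto_log_one_div_nhdsGT_zero :
    Tendsto (fun r : ℝ => Real.log (1 / r)) (𝓝[>] 0) atTop := by
  simpa only [one_div, Function.comp_def] using Real.tendsto_log_atTop.comp tendsto_inv_nhdsGT_zero

theorem stmt_12_general (Ω : Set ℂ) (hopen : IsOpen Ω) (hconn : IsConnected Ω)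
    (hdiam : 0 < EMetric.diam Ω)
    (β ε C r₀ : ℝ) (hβ : 0 < β) (hε : ε ∈ Set.Ioo (0 : ℝ) 1)
    (hC : 0 < C) (hr₀ : r₀ ∈ Set.Ioo (0 : ℝ) (Real.exp 1)⁻¹)
    (hΔ : ∀ a ∈ frontier Ω, ∀ r ∈ Set.Ioo (0 : ℝ) r₀, ∀ u : ℂ → ℝ,
      MemF Ω a r u → ∀ z ∈ Ω,
        dist z a = C * r * (Real.log (1 / r)) ^ (-β) → u z ≤ 1 - ε) :
    ∃ β' > β, CondU2 (frontier Ω) β' := by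
  obtain ⟨hε0, hε1⟩ := hε
  obtain ⟨w₁, hw₁, w₂, hw₂, hw⟩ := Metric.ediam_pos_iff.mp hdiam
  obtain ⟨β', hββ', hεβ'⟩ : ∃ β', β < β' ∧ β < ε * β' :=
    ⟨2 * β / ε, by rw [lt_div_iff₀ hε0]; nlinarith, by field_simp; linarith⟩
  have hloglog := Real.tendsto_log_atTop.comp tendsto_log_one_div_nhdsGT_zero
  have hsmall : ∀ᶠ r in 𝓝[>] 0, r < r₀ ∧ C * r ≤ dist w₁ w₂ / 2 ∧ 1 ≤ Real.log (1 / r) ∧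
      Real.log C < β' * Real.log (Real.log (1 / r)) ∧
      -((1 - ε) * Real.log C) < (ε * β' - β) * Real.log (Real.log (1 / r)) :=
    ((eventually_lt_nhds hr₀.1).filter_mono nhdsWithin_le_nhds).and <|
      (((tendsto_const_nhds.mul tendsto_id).eventually_le_const
        (by rw [mul_zero]; exact half_pos (dist_pos.mpr hw))).filter_mono nhdsWithin_le_nhds).and <|
      (tendsto_log_one_div_nhdsGT_zero.eventually_ge_atTop 1).and <|
      ((hloglog.const_mul_atTop (hβ.trans hββ')).eventually_gt_atTop _).and
      ((hloglog.const_mul_atTop (sub_pos.mpr hεβ')).eventually_gt_atTop _)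
  obtain ⟨r₁, hr₁, hsub⟩ := mem_nhdsGT_iff_exists_Ioo_subset.mp hsmall
  refine ⟨β', hββ', C, hC, r₁, hr₁, fun a ha r hr => ?_⟩
  obtain ⟨hrr₀, hCr, hL, hCβ', hgain⟩ := hsub hr
  obtain ⟨ζ, hζ, hζa⟩ := exists_frontier_mem_annulus_rpow hopen hconn.isPreconnected ha hw₁ hw₂
    hβ.le hC hr.1 hL hCr hCβ' hgain (hΔ a ha r ⟨hr.1, hrr₀⟩)
  exact ⟨ζ, hζa, hζ⟩

/-- If `Ω` satisfies `(Δ)_{2,β}` for some `β > 0`, then `∂Ω` satisfies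
`(U)_{2,β′}` for some `β′ > β`. -/
theorem stmt_12 (Ω : Set ℂ) (hopen : IsOpen Ω) (hconn : IsConnected Ω)
    (hbd : (frontier Ω).Nonempty) (hdiam : 0 < EMetric.diam Ω)
    (β ε C r₀ : ℝ) (hβ : 0 < β) (hε : ε ∈ Set.Ioo (0 : ℝ) 1)
    (hC : 0 < C) (hr₀ : r₀ ∈ Set.Ioo (0 : ℝ) (Real.exp 1)⁻¹)
    (hΔ : ∀ a ∈ frontier Ω, ∀ r ∈ Set.Ioo (0 : ℝ) r₀, ∀ u : ℂ → ℝ,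
      MemF Ω a r u → ∀ z ∈ Ω,
        dist z a = C * r * (Real.log (1 / r)) ^ (-β) → u z ≤ 1 - ε) :
    ∃ β' > β, CondU2 (frontier Ω) β' :=
  stmt_12_general Ω hopen hconn hdiam β ε C r₀ hβ hε hC hr₀ hΔ
end

section
/- For every β > 0 there exists a nonempty compact set E ⊆ ℂ such that the Hausdorff dimension of E equals 0 and E satisfies condition (U)_{2,β}. -/
/-!
Take the rapidly decreasing sequence `ℓₙ = ((n + 2)!)^(-β)` and let `E` be the set of sums
`∑ εₙ (ℓₙ - ℓₙ₊₁)` over all digit sequences `ε ∈ {0,1}^ℕ`. Points whose first `n` digits agree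
are within `ℓₙ` of each other, so `E` is covered by `2ⁿ` sets of diameter `ℓₙ`; since
`2ⁿ ℓₙ^d → 0` for every `d > 0`, the Hausdorff dimension is `0`. Flipping digit `n + 1` moves a
point by exactly `ℓₙ₊₁ - ℓₙ₊₂ ≥ (1 - 3^(-β)) (n + 3)^(-β) ℓₙ`. When `ℓₙ₊₁ ≤ r < ℓₙ` this move is
at most `r`, and since `log (1/r) > log (1/ℓₙ) ≳ n`, it is at least `C r (log (1/r))^(-β)`.
-/

open Metric Set

open Filter Topology MeasureTheory

lemma dimH_range_eq_zero_of_dist_le {X : Type*} [MetricSpace X] (f : (ℕ → Bool) → X)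
    (δ : ℕ → ℝ) (hf : ∀ n ε ε', (∀ k < n, ε k = ε' k) → dist (f ε) (f ε') ≤ δ n)
    (hδ : ∀ d : ℝ, 0 < d → Tendsto (fun n => 2 ^ n * δ n ^ d) atTop (𝓝 0)) :
    dimH (range f) = 0 := by
  borelize X
  have δ_nonneg (n : ℕ) : 0 ≤ δ n := dist_nonneg.trans (hf n default default fun _ _ => rfl)
  have δ_tendsto : Tendsto δ atTop (𝓝 0) :=
    squeeze_zero δ_nonneg (fun n => by
      simpa using le_mul_of_one_le_left (δ_nonneg n) (one_le_pow₀ one_le_two)) (hδ 1 one_pos)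
  let cyl (n : ℕ) (v : Fin n → Bool) : Set X := f '' {ε | ∀ i : Fin n, ε i = v i}
  have ediam_cyl (n : ℕ) (v : Fin n → Bool) : ediam (cyl n v) ≤ ENNReal.ofReal (δ n) := by
    refine ediam_le ?_
    rintro _ ⟨ε, hε, rfl⟩ _ ⟨ε', hε', rfl⟩
    rw [edist_dist]
    exact ENNReal.ofReal_le_ofReal (hf n ε ε' fun k hk => (hε ⟨k, hk⟩).trans (hε' ⟨k, hk⟩).symm)
  have range_subset (n : ℕ) : range f ⊆ ⋃ v, cyl n v := by
    rintro _ ⟨ε, rfl⟩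
    exact mem_iUnion.2 ⟨fun i => ε i, ε, fun _ => rfl, rfl⟩
  have hausdorff_zero (d : ℝ) (hd : 0 < d) : μH[d] (range f) = 0 := by
    refine le_antisymm ?_ bot_le
    calc μH[d] (range f) ≤ liminf (fun n => ∑ v, ediam (cyl n v) ^ d) atTop :=
          Measure.hausdorffMeasure_le_liminf_sum d _ _
            (ENNReal.ofReal_zero ▸ ENNReal.tendsto_ofReal δ_tendsto) cyl
            (Eventually.of_forall ediam_cyl) (Eventually.of_forall range_subset)
      _ ≤ liminf (fun n => ENNReal.ofReal (2 ^ n * δ n ^ d)) atTop := by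
          refine liminf_le_liminf (Eventually.of_forall fun n => ?_)
          calc ∑ v, ediam (cyl n v) ^ d ≤ ∑ _v : Fin n → Bool, ENNReal.ofReal (δ n) ^ d :=
                Finset.sum_le_sum fun v _ => ENNReal.rpow_le_rpow (ediam_cyl n v) hd.le
            _ = ENNReal.ofReal (2 ^ n * δ n ^ d) := by
                rw [ENNReal.ofReal_rpow_of_nonneg (δ_nonneg n) hd.le,
                  ENNReal.ofReal_mul (by positivity)]
                simp
      _ = 0 := by simpa using (ENNReal.tendsto_ofReal (hδ d hd)).liminf_eq
  refine le_antisymm (ENNReal.le_of_forall_pos_le_add fun d hd _ => ?_) bot_le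
  rw [zero_add]
  exact dimH_le_of_hausdorffMeasure_ne_top (by simp [hausdorff_zero d hd])

lemma exists_succ_le_lt_of_tendsto_zero {u : ℕ → ℝ} (hu : Tendsto u atTop (𝓝 0)) {r : ℝ}
    (hr : 0 < r) (hr₀ : r < u 0) : ∃ m, u (m + 1) ≤ r ∧ r < u m := by
  have hex : ∃ n, u n ≤ r := (hu.eventually (ge_mem_nhds hr)).exists
  obtain ⟨m, hm⟩ : ∃ m, Nat.find hex = m + 1 :=
    Nat.exists_eq_succ_of_ne_zero fun h0 => (Nat.find_spec hex).not_gt (h0 ▸ hr₀)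
  exact ⟨m, hm ▸ Nat.find_spec hex, lt_of_not_ge (Nat.find_min hex (by omega))⟩

noncomputable def digitSum (g : ℕ → ℝ) (ε : ℕ → Bool) : ℝ :=
  ∑' n, if ε n then g n else 0

section DigitSum

variable {g : ℕ → ℝ} (hg : ∀ n, 0 ≤ g n) (hs : Summable g)
include hg

lemma digit_nonneg (ε : ℕ → Bool) (n : ℕ) : 0 ≤ if ε n then g n else 0 := by
  split_ifs
  exacts [hg n, le_rfl]

lemma digit_le (ε : ℕ → Bool) (n : ℕ) : (if ε n then g n else 0) ≤ g n := by
  split_ifs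
  exacts [le_rfl, hg n]

include hs

lemma summable_digit (ε : ℕ → Bool) : Summable fun n => if ε n then g n else 0 :=
  hs.of_nonneg_of_le (digit_nonneg hg ε) (digit_le hg ε)

lemma continuous_digitSum : Continuous (digitSum g) :=
  continuous_tsum
    (fun n => (continuous_of_discreteTopology (f := fun b : Bool => if b then g n else 0)).comp
      (continuous_apply n)) hs
    (fun n ε => (Real.norm_of_nonneg (digit_nonneg hg ε n)).trans_le (digit_le hg ε n))

lemma abs_digitSum_sub_le {n : ℕ} {ε ε' : ℕ → Bool} (h : ∀ k < n, ε k = ε' k) :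
    |digitSum g ε - digitSum g ε'| ≤ ∑' k, g (k + n) := by
  have tail_mem (η : ℕ → Bool) :
      0 ≤ ∑' k, (if η (k + n) then g (k + n) else 0) ∧
        ∑' k, (if η (k + n) then g (k + n) else 0) ≤ ∑' k, g (k + n) :=
    ⟨tsum_nonneg fun k => digit_nonneg hg η _,
      ((summable_nat_add_iff n).2 (summable_digit hg hs η)).tsum_le_tsum
        (fun k => digit_le hg η _) ((summable_nat_add_iff n).2 hs)⟩
  have head_eq : ∑ k ∈ Finset.range n, (if ε k then g k else 0) =
      ∑ k ∈ Finset.range n, (if ε' k then g k else 0) :=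
    Finset.sum_congr rfl fun k hk => by rw [h k (Finset.mem_range.1 hk)]
  rw [digitSum, digitSum, ← (summable_digit hg hs ε).sum_add_tsum_nat_add n,
    ← (summable_digit hg hs ε').sum_add_tsum_nat_add n, head_eq, add_sub_add_left_eq_sub]
  exact abs_sub_le_of_nonneg_of_le (tail_mem ε).1 (tail_mem ε).2 (tail_mem ε').1 (tail_mem ε').2

lemma abs_digitSum_update_not_sub (ε : ℕ → Bool) (n : ℕ) :
    |digitSum g (Function.update ε n !(ε n)) - digitSum g ε| = g n := by
  rw [digitSum, digitSum, ← (summable_digit hg hs _).tsum_sub (summable_digit hg hs ε),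
    tsum_eq_single n fun k hk => by simp [Function.update_of_ne hk]]
  rcases ε n with _ | _ <;> simp [abs_of_nonneg (hg n)]

lemma condU2_range_digitSum {β C r₀ : ℝ} (hC : 0 < C) (hr₀ : 0 < r₀)
    (hgap : ∀ r ∈ Ioo 0 r₀, ∃ n, C * r * Real.log (1 / r) ^ (-β) ≤ g n ∧ g n ≤ r) :
    CondU2 (range fun ε => (digitSum g ε : ℂ)) β := by
  refine ⟨C, hC, r₀, hr₀, ?_⟩
  rintro _ ⟨ε, rfl⟩ r hr
  obtain ⟨n, hlow, hup⟩ := hgap r hr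
  have hdist : dist (digitSum g (Function.update ε n !(ε n)) : ℂ) (digitSum g ε) = g n := by
    rw [Complex.isometry_ofReal.dist_eq, Real.dist_eq, abs_digitSum_update_not_sub hg hs]
  exact ⟨_, ⟨hdist ▸ hlow, hdist ▸ hup⟩, _, rfl⟩

end DigitSum

noncomputable def scale (β : ℝ) (n : ℕ) : ℝ := ((n + 2).factorial : ℝ) ^ (-β)

noncomputable def gap (β : ℝ) (n : ℕ) : ℝ := scale β n - scale β (n + 1)

-- `1 - 3^(-β) ≤ gap β n / scale β n`, and `q = β log 2 / 3` satisfies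
-- `q (n + 3) ≤ log (1 / scale β n)`.
noncomputable def annulusConst (β : ℝ) : ℝ := (1 - 3 ^ (-β)) * (β * Real.log 2 / 3) ^ β

section Scale

variable {β : ℝ}

lemma scale_pos (n : ℕ) : 0 < scale β n := by
  unfold scale
  positivity

lemma scale_succ (n : ℕ) : scale β (n + 1) = ((n : ℝ) + 3) ^ (-β) * scale β n := by
  rw [scale, scale, show n + 1 + 2 = (n + 2) + 1 by ring, Nat.factorial_succ, Nat.cast_mul,
    Real.mul_rpow (by positivity) (by positivity),
    show ((n + 2 + 1 : ℕ) : ℝ) = n + 3 by push_cast; ring]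

lemma log_one_div_scale (n : ℕ) : Real.log (1 / scale β n) = β * Real.log (n + 2).factorial := by
  rw [scale, one_div, Real.log_inv, Real.log_rpow (by positivity)]
  ring

lemma add_one_mul_log_two_le_log_factorial (n : ℕ) :
    ((n : ℝ) + 1) * Real.log 2 ≤ Real.log (n + 2).factorial := by
  have two_pow_le := Nat.factorial_mul_pow_le_factorial (m := 1) (n := n + 1)
  rw [Nat.factorial_one, one_mul, show 1 + (n + 1) = n + 2 by ring] at two_pow_le
  calc ((n : ℝ) + 1) * Real.log 2 = Real.log (2 ^ (n + 1)) := by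
        rw [Real.log_pow]; push_cast; ring
    _ ≤ Real.log (n + 2).factorial :=
        Real.log_le_log (by positivity) (by exact_mod_cast two_pow_le)

variable (hβ : 0 < β)
include hβ

lemma gap_nonneg (n : ℕ) : 0 ≤ gap β n := by
  rw [gap, sub_nonneg, scale_succ]
  exact mul_le_of_le_one_left (scale_pos n).le
    (Real.rpow_le_one_of_one_le_of_nonpos (by linarith [n.cast_nonneg (α := ℝ)]) (by linarith))

lemma tendsto_two_pow_mul_scale_rpow {d : ℝ} (hd : 0 < d) :
    Tendsto (fun n => 2 ^ n * scale β n ^ d) atTop (𝓝 0) := by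
  set f : ℕ → ℝ := fun n => 2 ^ n * scale β n ^ d
  have f_pos (n : ℕ) : 0 < f n := by have := scale_pos (β := β) n; positivity
  have ratio (n : ℕ) : f (n + 1) / f n = 2 * ((n : ℝ) + 3) ^ (-(β * d)) := by
    have := scale_pos (β := β) n
    simp only [f]
    rw [scale_succ, Real.mul_rpow (by positivity) this.le, ← Real.rpow_mul (by positivity),
      pow_succ]
    field_simp
  have ratio_tendsto : Tendsto (fun n => ‖f (n + 1)‖ / ‖f n‖) atTop (𝓝 0) := by
    simp_rw [Real.norm_of_nonneg (f_pos _).le, ratio]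
    simpa using ((tendsto_rpow_neg_atTop (by positivity)).comp
      (tendsto_atTop_add_const_right _ 3 tendsto_natCast_atTop_atTop)).const_mul 2
  exact (summable_of_ratio_test_tendsto_lt_one zero_lt_one
    (Eventually.of_forall fun n => (f_pos n).ne') ratio_tendsto).tendsto_atTop_zero

lemma tendsto_scale_zero : Tendsto (scale β) atTop (𝓝 0) :=
  squeeze_zero (fun n => (scale_pos n).le)
    (fun n => by simpa using le_mul_of_one_le_left (scale_pos n).le (one_le_pow₀ one_le_two))
    (tendsto_two_pow_mul_scale_rpow hβ one_pos)

lemma hasSum_gap_nat_add (n : ℕ) : HasSum (fun k => gap β (k + n)) (scale β n) := by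
  rw [hasSum_iff_tendsto_nat_of_nonneg fun k => gap_nonneg hβ _]
  have partial_sum (N : ℕ) :
      ∑ k ∈ Finset.range N, gap β (k + n) = scale β n - scale β (N + n) := by
    simpa [gap, add_right_comm] using Finset.sum_range_sub' (fun k => scale β (k + n)) N
  simp_rw [partial_sum]
  simpa using tendsto_const_nhds.sub ((tendsto_scale_zero hβ).comp (tendsto_add_atTop_nat n))

lemma summable_gap : Summable (gap β) := by
  simpa using (hasSum_gap_nat_add hβ 0).summable

lemma annulusConst_pos : 0 < annulusConst β := by
  have : (3 : ℝ) ^ (-β) < 1 := Real.rpow_lt_one_of_one_lt_of_neg (by norm_num) (by linarith)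
  have := Real.log_pos (show (1 : ℝ) < 2 by norm_num)
  have : 0 < 1 - (3 : ℝ) ^ (-β) := by linarith
  unfold annulusConst
  positivity

lemma one_sub_three_rpow_mul_scale_le_gap (n : ℕ) : (1 - 3 ^ (-β)) * scale β n ≤ gap β n := by
  have : ((n : ℝ) + 3) ^ (-β) ≤ 3 ^ (-β) :=
    Real.rpow_le_rpow_of_nonpos (by norm_num) (by linarith [n.cast_nonneg (α := ℝ)]) (by linarith)
  have := scale_pos (β := β) n
  rw [gap, scale_succ]
  nlinarith

lemma annulusConst_mul_le_gap_succ (m : ℕ) {r : ℝ} (hr : 0 < r) (hrm : r < scale β m) :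
    annulusConst β * r * Real.log (1 / r) ^ (-β) ≤ gap β (m + 1) := by
  set q := β * Real.log 2 / 3 with hq_def
  have hq : 0 < q := by have := Real.log_pos (show (1 : ℝ) < 2 by norm_num); positivity
  have log_gt : q * ((m : ℝ) + 3) < Real.log (1 / r) :=
    calc q * ((m : ℝ) + 3) ≤ β * (((m : ℝ) + 1) * Real.log 2) := by
          have := Real.log_pos (show (1 : ℝ) < 2 by norm_num)
          rw [hq_def]
          nlinarith [mul_pos hβ this, m.cast_nonneg (α := ℝ)]
      _ ≤ β * Real.log (m + 2).factorial := by
          gcongr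
          exact add_one_mul_log_two_le_log_factorial m
      _ = Real.log (1 / scale β m) := (log_one_div_scale m).symm
      _ < Real.log (1 / r) :=
          Real.log_lt_log (one_div_pos.2 (scale_pos m)) (one_div_lt_one_div_of_lt hr hrm)
  have rpow_le : Real.log (1 / r) ^ (-β) ≤ q ^ (-β) * ((m : ℝ) + 3) ^ (-β) := by
    rw [← Real.mul_rpow hq.le (by positivity)]
    exact Real.rpow_le_rpow_of_nonpos (by positivity) log_gt.le (by linarith)
  calc annulusConst β * r * Real.log (1 / r) ^ (-β)
      ≤ annulusConst β * scale β m * (q ^ (-β) * ((m : ℝ) + 3) ^ (-β)) := by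
        have := annulusConst_pos hβ
        have := scale_pos (β := β) m
        have : 0 ≤ Real.log (1 / r) := le_trans (by positivity) log_gt.le
        gcongr
      _ = (1 - 3 ^ (-β)) * scale β (m + 1) := by
        rw [scale_succ, annulusConst, Real.rpow_neg hq.le, hq_def]
        field_simp
      _ ≤ gap β (m + 1) := one_sub_three_rpow_mul_scale_le_gap hβ (m + 1)

lemma exists_annulusConst_mul_le_gap_le {r : ℝ} (hr : r ∈ Ioo 0 (scale β 0)) :
    ∃ n, annulusConst β * r * Real.log (1 / r) ^ (-β) ≤ gap β n ∧ gap β n ≤ r := by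
  obtain ⟨m, hm_le, hm_lt⟩ :=
    exists_succ_le_lt_of_tendsto_zero (tendsto_scale_zero hβ) hr.1 hr.2
  refine ⟨m + 1, annulusConst_mul_le_gap_succ hβ m hr.1 hm_lt, ?_⟩
  have : gap β (m + 1) = scale β (m + 1) - scale β (m + 2) := rfl
  linarith [scale_pos (β := β) (m + 2)]

end Scale

/-- For every `β > 0` there is a nonempty compact set `E ⊆ ℂ` of Hausdorff
dimension `0` satisfying condition `(U)_{2,β}`. -/
theorem stmt_19 (β : ℝ) (hβ : 0 < β) :
    ∃ E : Set ℂ, E.Nonempty ∧ IsCompact E ∧ dimH E = 0 ∧ CondU2 E β := by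
  have hg := gap_nonneg hβ
  have hs := summable_gap hβ
  refine ⟨range fun ε => (digitSum (gap β) ε : ℂ), range_nonempty _,
    isCompact_range (Complex.continuous_ofReal.comp (continuous_digitSum hg hs)), ?_,
    condU2_range_digitSum hg hs (annulusConst_pos hβ) (scale_pos 0)
      fun r hr => exists_annulusConst_mul_le_gap_le hβ hr⟩
  refine dimH_range_eq_zero_of_dist_le _ (scale β) (fun n ε ε' h => ?_)
    fun d hd => tendsto_two_pow_mul_scale_rpow hβ hd
  rw [Complex.isometry_ofReal.dist_eq, Real.dist_eq, ← (hasSum_gap_nat_add hβ n).tsum_eq]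
  exact abs_digitSum_sub_le hg hs h
end
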